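/- arXiv:1502.06061 — 4 statements merged into one kernel-verified Lean document; each statement's English description precedes it below -/
import Mathlib

section
/- Let V be a finite-dimensional real topological vector space of dimension n ≥ 3 equipped with a symmetric bilinear form B, and let h ∈ V satisfy B(h,h) = 1, with B negative definite on the hyperplane {v ∈ V : B(v,h) = 0}. Let N ⊆ V be a closed convex cone such that (i) B(v,h) > 0 for every nonzero v ∈ N, and (ii) every v ∈ V with B(v,v) > 0 and B(v,h) > 0 lies in the topological interior of N. Suppose there exist e, f ∈ V such that: e ∈ N, e ≠ 0, B(e,e) = 0; f ≠ 0, B(f,h) = 0, B(e,f) = 0; and (e + ℝ·f) ∩ N = {e}. Then N is not a polyhedral cone, i.e., N is not the set of all nonnegative linear combinations of any finite subset of V. -/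
/-!
If `N` were generated by a finite set `S`, the cone `D = N + ℝ≥0 • (-e)` of directions pointing
from `e` into `N` would be finitely generated, hence closed: by the conic Carathéodory theorem it
is a finite union of cones over linearly independent vectors, and these are images of closed
orthants under closed embeddings. (The topology is Hausdorff because the closed cone `N` contains
no line.) For `ε > 0` the class `e + s • (f + ε • h)` is big for small `s > 0`, so
`f + ε • h ∈ D`; letting `ε → 0` gives `f ∈ D`, i.e. `e + ε • f ∈ N` for some `ε > 0`,
contradicting `(e + ℝ • f) ∩ N = {e}`.
-/

open Topology

theorem IsTopologicalAddGroup.t2Space_of_isClosed_of_inter_neg_eq_zero {G : Type*}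
    [AddGroup G] [TopologicalSpace G] [IsTopologicalAddGroup G] {N : Set G} (hN : IsClosed N)
    (hN0 : N ∩ -N = {0}) : T2Space G := by
  rw [IsTopologicalAddGroup.t2Space_iff_zero_closed, ← closure_subset_iff_isClosed]
  have := closure_minimal hN0.ge (hN.inter hN.neg)
  rwa [hN0] at this

theorem Set.inter_neg_eq_zero_of_pos {V : Type*} [AddCommGroup V] [Module ℝ V] {N : Set V}
    (φ : V →ₗ[ℝ] ℝ) (hN0 : 0 ∈ N) (hφ : ∀ v ∈ N, v ≠ 0 → 0 < φ v) : N ∩ -N = {0} := by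
  refine Set.eq_singleton_iff_unique_mem.2 ⟨⟨hN0, by simpa using hN0⟩, fun v ⟨hv, hnv⟩ => ?_⟩
  by_contra hne
  have := hφ (-v) hnv (neg_ne_zero.2 hne)
  linarith [hφ v hv hne, φ.map_neg v]

theorem IsClosed.mem_of_forall_pos_add_smul_mem {V : Type*} [AddCommGroup V] [Module ℝ V]
    [TopologicalSpace V] [ContinuousAdd V] [ContinuousSMul ℝ V] {C : Set V} (hC : IsClosed C)
    {x y : V} (h : ∀ ε : ℝ, 0 < ε → x + ε • y ∈ C) : x ∈ C :=
  hC.mem_of_tendsto (f := fun ε : ℝ => x + ε • y) (b := 𝓝[>] 0)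
    (((continuous_const.add (continuous_id.smul continuous_const)).tendsto' 0 x
      (by simp)).mono_left nhdsWithin_le_nhds) (eventually_nhdsWithin_of_forall h)

theorem LinearMap.BilinForm.exists_pos_apply_add_smul_pos {V : Type*} [AddCommGroup V]
    [Module ℝ V] {B : LinearMap.BilinForm ℝ V} {e f h : V} (hsymm : ∀ v w, B v w = B w v)
    (hh : B h h = 1) (hee : B e e = 0) (hef : B e f = 0) (hfh : B f h = 0) (hff : B f f < 0)
    (heh : 0 < B e h) {ε : ℝ} (hε : 0 < ε) :
    ∃ s : ℝ, 0 < s ∧ 0 < B (e + s • (f + ε • h)) (e + s • (f + ε • h)) ∧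
      0 < B (e + s • (f + ε • h)) h := by
  -- chosen so that `B x x = s ^ 2 * (1 + ε ^ 2)` for `x = e + s • (f + ε • h)`
  set s := 2 * ε * B e h / (1 - B f f)
  have hs : 0 < s := div_pos (by positivity) (by linarith)
  have hsB : s * (1 - B f f) = 2 * ε * B e h := div_mul_cancel₀ _ (by linarith)
  refine ⟨s, hs, ?_, ?_⟩ <;>
    simp only [map_add, map_smul, LinearMap.add_apply, LinearMap.smul_apply, smul_eq_mul, hee,
      hef, hfh, hh, hsymm f e, hsymm h e, hsymm h f]
  · have : 0 < s ^ 2 * (1 + ε ^ 2) := by positivity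
    linear_combination this + s * hsB
  · linear_combination heh + mul_pos hs hε

namespace PointedCone

variable {V : Type*} [AddCommGroup V] [Module ℝ V]

theorem sum_smul_mem_hull {s : Finset V} {c : V → ℝ} (hc : ∀ v ∈ s, 0 ≤ c v) :
    ∑ v ∈ s, c v • v ∈ hull ℝ (s : Set V) :=
  Submodule.sum_mem _ fun v hv => smul_mem _ (hc v hv) (subset_hull hv)

theorem coe_hull_finset (s : Finset V) :
    (hull ℝ (s : Set V) : Set V) = {x | ∃ c : V → ℝ, (∀ v, 0 ≤ c v) ∧ x = ∑ v ∈ s, c v • v} := by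
  ext x
  constructor
  · intro hx
    obtain ⟨c, -, rfl⟩ := Submodule.mem_span_finset.1 hx
    exact ⟨fun v => c v, fun v => (c v).2, rfl⟩
  · rintro ⟨c, hc, rfl⟩
    exact sum_smul_mem_hull fun v _ => hc v

theorem exists_mem_hull_erase_of_not_linearIndepOn [DecidableEq V] {s : Finset V} {x : V}
    (hx : x ∈ hull ℝ (s : Set V)) (hs : ¬LinearIndepOn ℝ id (s : Set V)) :
    ∃ v ∈ s, x ∈ hull ℝ (s.erase v : Set V) := by
  rw [← SetLike.mem_coe, coe_hull_finset] at hx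
  obtain ⟨c, hc, rfl⟩ := hx
  obtain ⟨g, hg, hpos⟩ : ∃ g : V → ℝ, ∑ v ∈ s, g v • v = 0 ∧ ∃ v ∈ s, 0 < g v := by
    obtain ⟨g, hg, v, hv, hgv⟩ := not_linearIndepOn_finset_iff.1 hs
    rcases hgv.lt_or_gt with hgv | hgv
    · exact ⟨-g, by simpa [neg_smul] using hg, v, hv, neg_pos.2 hgv⟩
    · exact ⟨g, hg, v, hv, hgv⟩
  -- Subtract the largest multiple `t • g` of the relation that keeps all coefficients
  -- nonnegative; the coefficient at a minimiser `v₀` of `c / g` then vanishes.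
  obtain ⟨v₀, hv₀, hmin⟩ := (s.filter (0 < g ·)).exists_min_image (fun v => c v / g v)
    (let ⟨v, hv, hgv⟩ := hpos; ⟨v, Finset.mem_filter.2 ⟨hv, hgv⟩⟩)
  rw [Finset.mem_filter] at hv₀
  set t := c v₀ / g v₀
  have ht : 0 ≤ t := div_nonneg (hc v₀) hv₀.2.le
  have hc' : ∀ v ∈ s.erase v₀, 0 ≤ c v - t * g v := by
    intro v hv
    rcases le_or_gt (g v) 0 with hgv | hgv
    · nlinarith [hc v]
    · have hv' : v ∈ s.filter (0 < g ·) := Finset.mem_filter.2 ⟨Finset.mem_of_mem_erase hv, hgv⟩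
      linarith [(le_div_iff₀ hgv).1 (hmin v hv')]
  have hv₀_zero : c v₀ - t * g v₀ = 0 := by
    rw [div_mul_cancel₀ _ hv₀.2.ne', sub_self]
  have hsum : ∑ v ∈ s, c v • v = ∑ v ∈ s.erase v₀, (c v - t * g v) • v := by
    rw [Finset.sum_erase _ (by rw [hv₀_zero, zero_smul])]
    simp only [sub_smul, mul_smul, Finset.sum_sub_distrib, ← Finset.smul_sum, hg, smul_zero,
      sub_zero]
  exact ⟨v₀, hv₀.1, hsum ▸ sum_smul_mem_hull hc'⟩

theorem exists_linearIndepOn_of_mem_hull {s : Finset V} {x : V} (hx : x ∈ hull ℝ (s : Set V)) :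
    ∃ t ⊆ s, LinearIndepOn ℝ id (t : Set V) ∧ x ∈ hull ℝ (t : Set V) := by
  classical
  induction s using Finset.strongInduction with
  | H s ih =>
    by_cases hs : LinearIndepOn ℝ id (s : Set V)
    · exact ⟨s, subset_rfl, hs, hx⟩
    · obtain ⟨v, hv, hxv⟩ := exists_mem_hull_erase_of_not_linearIndepOn hx hs
      obtain ⟨t, hts, ht, hxt⟩ := ih _ (Finset.erase_ssubset hv) hxv
      exact ⟨t, hts.trans (Finset.erase_subset _ _), ht, hxt⟩

theorem mem_sup_hull_neg_iff {P : PointedCone ℝ V} {e x : V} (he : e ∈ P) :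
    x ∈ P ⊔ hull ℝ {-e} ↔ ∃ s : ℝ, 0 < s ∧ e + s • x ∈ P := by
  constructor
  · rw [Submodule.mem_sup]
    rintro ⟨y, hy, z, hz, rfl⟩
    obtain ⟨⟨t, ht⟩, rfl⟩ := Submodule.mem_span_singleton.1 hz
    refine ⟨1 / (1 + t), by positivity, ?_⟩
    have : e + (1 / (1 + t)) • (y + (⟨t, ht⟩ : {c : ℝ // 0 ≤ c}) • -e) =
        (1 / (1 + t)) • y + (1 / (1 + t)) • e := by
      rw [Nonneg.mk_smul]
      match_scalars <;> field_simp
      ring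
    rw [this]
    exact add_mem (smul_mem _ (by positivity) hy) (smul_mem _ (by positivity) he)
  · rintro ⟨s, hs, hx⟩
    have : x = s⁻¹ • (e + s • x) + s⁻¹ • -e := by
      match_scalars <;> field_simp
      ring
    rw [this]
    exact Submodule.add_mem_sup (smul_mem _ (inv_nonneg.2 hs.le) hx)
      (smul_mem _ (inv_nonneg.2 hs.le) (subset_hull rfl))

variable [TopologicalSpace V] [IsTopologicalAddGroup V] [ContinuousSMul ℝ V] [T2Space V]

theorem isClosed_hull_of_linearIndepOn {t : Finset V} (ht : LinearIndepOn ℝ id (t : Set V)) :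
    IsClosed (hull ℝ (t : Set V) : Set V) := by
  let φ := Fintype.linearCombination ℝ ((↑) : t → V)
  have himage : (hull ℝ (t : Set V) : Set V) = φ '' Set.Ici 0 := by
    ext x
    constructor
    · intro hx
      obtain ⟨c, rfl⟩ := Submodule.mem_span_finset'.1 hx
      exact ⟨fun v => c v, fun v => (c v).2, Fintype.linearCombination_apply _ _ _⟩
    · rintro ⟨c, hc, rfl⟩
      rw [SetLike.mem_coe, Fintype.linearCombination_apply]
      exact Submodule.sum_mem _ fun v _ => smul_mem _ (hc v) (subset_hull v.2)
  rw [himage]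
  exact (LinearMap.isClosedEmbedding_of_injective (LinearMap.ker_eq_bot.2
    ht.fintypeLinearCombination_injective)).isClosedMap _ isClosed_Ici

theorem isClosed_of_fg {C : PointedCone ℝ V} (hC : C.FG) : IsClosed (C : Set V) := by
  classical
  obtain ⟨s, rfl⟩ := hC
  have hunion : (hull ℝ (s : Set V) : Set V) =
      ⋃ t ∈ s.powerset.filter fun t : Finset V => LinearIndepOn ℝ id (t : Set V),
        (hull ℝ (t : Set V) : Set V) := by
    ext x
    simp only [Set.mem_iUnion, Finset.mem_filter, Finset.mem_powerset, SetLike.mem_coe,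
      exists_prop]
    constructor
    · intro hx
      obtain ⟨t, hts, ht, hxt⟩ := exists_linearIndepOn_of_mem_hull hx
      exact ⟨t, ⟨hts, ht⟩, hxt⟩
    · rintro ⟨t, ⟨hts, -⟩, hxt⟩
      exact Submodule.span_mono (Finset.coe_subset.2 hts) hxt
  rw [hunion]
  exact isClosed_biUnion_finset fun t ht =>
    isClosed_hull_of_linearIndepOn (Finset.mem_filter.1 ht).2

end PointedCone

theorem stmt_0_general
    (V : Type*) [AddCommGroup V] [Module ℝ V] [TopologicalSpace V]
    [IsTopologicalAddGroup V] [ContinuousSMul ℝ V]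
    (B : LinearMap.BilinForm ℝ V) (hsymm : ∀ v w : V, B v w = B w v)
    (h : V) (hh : B h h = 1)
    (hneg : ∀ v : V, v ≠ 0 → B v h = 0 → B v v < 0)
    (N : Set V) (hNclosed : IsClosed N)
    (hKleiman : ∀ v ∈ N, v ≠ 0 → 0 < B v h)
    (hbig : ∀ v : V, 0 < B v v → 0 < B v h → v ∈ interior N)
    (e f : V)
    (heN : e ∈ N) (he0 : e ≠ 0) (hee : B e e = 0)
    (hf0 : f ≠ 0) (hfh : B f h = 0) (hef : B e f = 0)
    (hline : {v : V | ∃ s : ℝ, v = e + s • f} ∩ N = {e}) :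
    ¬ ∃ S : Finset V, N = {x : V | ∃ c : V → ℝ, (∀ v, 0 ≤ c v) ∧
      x = ∑ v ∈ S, c v • v} := by
  rintro ⟨S, hS⟩
  set P := PointedCone.hull ℝ (S : Set V)
  obtain rfl : N = P := hS.trans (PointedCone.coe_hull_finset S).symm
  have : T2Space V := IsTopologicalAddGroup.t2Space_of_isClosed_of_inter_neg_eq_zero hNclosed
    (Set.inter_neg_eq_zero_of_pos (B.flip h) P.zero_mem hKleiman)
  set D := P ⊔ PointedCone.hull ℝ {-e}
  have hD : IsClosed (D : Set V) := PointedCone.isClosed_of_fg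
    ((Submodule.fg_span S.finite_toSet).sup (Submodule.fg_span_singleton _))
  have hfD : f ∈ D := hD.mem_of_forall_pos_add_smul_mem fun ε hε => by
    obtain ⟨s, hs, hpos, hposh⟩ := B.exists_pos_apply_add_smul_pos hsymm hh hee hef hfh
      (hneg f hf0 hfh) (hKleiman e heN he0) hε
    exact (PointedCone.mem_sup_hull_neg_iff heN).2 ⟨s, hs, interior_subset (hbig _ hpos hposh)⟩
  obtain ⟨ε, hε, hmem⟩ := (PointedCone.mem_sup_hull_neg_iff heN).1 hfD
  have : e + ε • f ∈ ({e} : Set V) := hline ▸ ⟨⟨ε, rfl⟩, hmem⟩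
  simp [hε.ne', hf0] at this

/-- Abstract convex-geometric criterion for non-polyhedrality of a closed convex cone
(Proposition 2.1 of the paper). -/
theorem stmt_0
    (V : Type*) [AddCommGroup V] [Module ℝ V] [TopologicalSpace V]
    [IsTopologicalAddGroup V] [ContinuousSMul ℝ V] [FiniteDimensional ℝ V]
    (hdim : 3 ≤ Module.finrank ℝ V)
    (B : LinearMap.BilinForm ℝ V) (hsymm : ∀ v w : V, B v w = B w v)
    (h : V) (hh : B h h = 1)
    (hneg : ∀ v : V, v ≠ 0 → B v h = 0 → B v v < 0)
    (N : Set V) (hNclosed : IsClosed N) (hNconvex : Convex ℝ N)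
    (hNcone : ∀ (c : ℝ) (v : V), 0 ≤ c → v ∈ N → c • v ∈ N)
    (hKleiman : ∀ v ∈ N, v ≠ 0 → 0 < B v h)
    (hbig : ∀ v : V, 0 < B v v → 0 < B v h → v ∈ interior N)
    (e f : V)
    (heN : e ∈ N) (he0 : e ≠ 0) (hee : B e e = 0)
    (hf0 : f ≠ 0) (hfh : B f h = 0) (hef : B e f = 0)
    (hline : {v : V | ∃ s : ℝ, v = e + s • f} ∩ N = {e}) :
    ¬ ∃ S : Finset V, N = {x : V | ∃ c : V → ℝ, (∀ v, 0 ≤ c v) ∧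
      x = ∑ v ∈ S, c v • v} :=
  stmt_0_general V B hsymm h hh hneg N hNclosed hKleiman hbig e f heN he0 hee hf0 hfh hef hline
end

section
/- Let g, s, r be real numbers with g ≥ 2, s > 0, and r > (g+s)(g−1)/s. Let b₀ be a real number and b₁, b₂ nonnegative real numbers satisfying 2·b₁·b₂ + (2g−2)·b₁² ≥ 2g·b₀². Then b₁·√((g+s)·r) + b₂·√((g+s)/r) ≥ 2g·|b₀|. -/
/-!
Put `A = √((g + s) r)` and `B = √((g + s) / r)`, so that `A B = g + s`. Completing the square in
`b₁ A + b₂ B` gives the identity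
`(g + s)² ((b₁ A + b₂ B)² - 4 g b₁ b₂ - 4 g (g - 1) b₁²)
  = ((g + s) b₂ B + (s - g) b₁ A)² + 4 g (g + s) b₁² (s r - (g - 1)(g + s))`,
whose right-hand side is nonnegative exactly because of the bound on `r`. Hence
`(2 g b₀)² ≤ 2 g (2 b₁ b₂ + (2 g - 2) b₁²) ≤ (b₁ A + b₂ B)²`.
-/

lemma Real.sqrt_mul_mul_sqrt_div {a r : ℝ} (ha : 0 ≤ a) (hr : 0 < r) :
    √(a * r) * √(a / r) = a := by
  rw [← Real.sqrt_mul (by positivity), show a * r * (a / r) = a * a by field_simp,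
    Real.sqrt_mul_self ha]

section Vojta

variable {R : Type*} {g s r A B b₁ b₂ : R}

lemma vojta_sq_identity [CommRing R] (hA : A ^ 2 = (g + s) * r) (hAB : A * B = g + s) :
    (g + s) ^ 2 * ((b₁ * A + b₂ * B) ^ 2 - 4 * g * b₁ * b₂ - 4 * g * (g - 1) * b₁ ^ 2)
      = ((g + s) * b₂ * B + (s - g) * b₁ * A) ^ 2
        + 4 * g * (g + s) * b₁ ^ 2 * (s * r - (g - 1) * (g + s)) := by
  linear_combination ((g + s) ^ 2 * b₁ ^ 2 - (s - g) ^ 2 * b₁ ^ 2) * hA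
    + (2 * (g + s) ^ 2 * b₁ * b₂ - 2 * (g + s) * (s - g) * b₁ * b₂) * hAB

lemma vojta_quadratic_le_sq [Field R] [LinearOrder R] [IsStrictOrderedRing R]
    (hg : 0 ≤ g) (hgs : 0 < g + s) (hr : (g - 1) * (g + s) ≤ s * r)
    (hA : A ^ 2 = (g + s) * r) (hAB : A * B = g + s) :
    4 * g * b₁ * b₂ + 4 * g * (g - 1) * b₁ ^ 2 ≤ (b₁ * A + b₂ * B) ^ 2 := by
  have hsq : 0 ≤ (g + s) ^ 2 *
      ((b₁ * A + b₂ * B) ^ 2 - 4 * g * b₁ * b₂ - 4 * g * (g - 1) * b₁ ^ 2) := by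
    rw [vojta_sq_identity hA hAB]
    have : 0 ≤ s * r - (g - 1) * (g + s) := sub_nonneg.mpr hr
    positivity
  linarith [nonneg_of_mul_nonneg_right hsq (by positivity)]

end Vojta

/-- Numerical core of Vojta's nefness criterion (Proposition 3.2). -/
theorem stmt_1 (g s r b₀ b₁ b₂ : ℝ)
    (hg : 2 ≤ g) (hs : 0 < s) (hr : (g + s) * (g - 1) / s < r)
    (hb₁ : 0 ≤ b₁) (hb₂ : 0 ≤ b₂)
    (hineq : 2 * g * b₀ ^ 2 ≤ 2 * b₁ * b₂ + (2 * g - 2) * b₁ ^ 2) :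
    2 * g * |b₀| ≤ b₁ * Real.sqrt ((g + s) * r) + b₂ * Real.sqrt ((g + s) / r) := by
  have hgs : 0 < g + s := by linarith
  have hg₁ : 0 < g - 1 := by linarith
  have hr₀ : 0 < r := lt_trans (by positivity) hr
  have hr' : (g - 1) * (g + s) ≤ s * r := by
    rw [div_lt_iff₀ hs] at hr; linarith
  have hA : √((g + s) * r) ^ 2 = (g + s) * r := Real.sq_sqrt (by positivity)
  have hAB := Real.sqrt_mul_mul_sqrt_div hgs.le hr₀
  refine le_of_sq_le_sq ?_ (by positivity)
  calc (2 * g * |b₀|) ^ 2 = 2 * g * (2 * g * b₀ ^ 2) := by rw [mul_pow, sq_abs]; ring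
    _ ≤ 2 * g * (2 * b₁ * b₂ + (2 * g - 2) * b₁ ^ 2) := by gcongr
    _ = 4 * g * b₁ * b₂ + 4 * g * (g - 1) * b₁ ^ 2 := by ring
    _ ≤ _ := vojta_quadratic_le_sq (by linarith) hgs hr' hA hAB
end

section
/- Let g, s, r be real numbers with g > 1, s > 0, and r > 0, and let b₁, b₂ be nonnegative real numbers. If b₂²·(g+s)/r + 2·b₁·b₂·(s−g) + b₁²·((g+s)·r − 4g(g−1)) < 0, then r ≤ (g+s)(g−1)/s. -/
/-!
The left-hand side is the binary quadratic form `a x² + 2 b x y + c y²` with `a = (g + s) / r > 0`,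
`b = s - g`, `c = (g + s) r - 4 g (g - 1)`, evaluated at `(x, y) = (b₂, b₁)`. A form with `a > 0`
that takes a negative value has positive discriminant `b² - a c`, and since
`(g + s)² - (s - g)² = 4 g s`, the inequality `a c < b²` reads `s r < (g + s)(g - 1)`.
-/

/-- Completing the square: `a (a x² + 2 b x y + c y²) = (a x + b y)² + (a c - b²) y²`. -/
theorem mul_lt_sq_of_quadratic_form_neg {a b c x y : ℝ} (ha : 0 < a)
    (h : a * x ^ 2 + 2 * b * x * y + c * y ^ 2 < 0) : a * c < b ^ 2 := by
  by_contra! hdisc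
  nlinarith [sq_nonneg (a * x + b * y), mul_nonneg (sub_nonneg.2 hdisc) (sq_nonneg y)]

theorem stmt_2_general (g s r b₁ b₂ : ℝ)
    (hg : 1 < g) (hs : 0 < s) (hr : 0 < r)
    (hneg : b₂ ^ 2 * (g + s) / r + 2 * b₁ * b₂ * (s - g)
      + b₁ ^ 2 * ((g + s) * r - 4 * g * (g - 1)) < 0) :
    r ≤ (g + s) * (g - 1) / s := by
  have hdisc : (g + s) / r * ((g + s) * r - 4 * g * (g - 1)) < (s - g) ^ 2 :=
    mul_lt_sq_of_quadratic_form_neg (x := b₂) (y := b₁) (by positivity) (by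
      convert hneg using 1
      ring)
  have hdisc' : s * r < (g + s) * (g - 1) := by
    rw [div_mul_eq_mul_div, div_lt_iff₀ hr] at hdisc
    nlinarith
  rw [le_div_iff₀ hs]
  linarith

/-- Discriminant step in the proof of Vojta's nefness criterion (Proposition 3.2). -/
theorem stmt_2 (g s r b₁ b₂ : ℝ)
    (hg : 1 < g) (hs : 0 < s) (hr : 0 < r)
    (hb₁ : 0 ≤ b₁) (hb₂ : 0 ≤ b₂)
    (hneg : b₂ ^ 2 * (g + s) / r + 2 * b₁ * b₂ * (s - g)
      + b₁ ^ 2 * ((g + s) * r - 4 * g * (g - 1)) < 0) :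
    r ≤ (g + s) * (g - 1) / s :=
  stmt_2_general g s r b₁ b₂ hg hs hr hneg
end

section
/- Let K ⊆ ℝ² be the convex hull of a finite set of points and assume K has nonempty interior. Let e ∈ K and let f ∈ ℝ² be a nonzero vector with (e + ℝ·f) ∩ K = {e}, and let p be a point in the interior of K. Then there exists m ∈ ℝ such that the closed segment joining e to p + m·f meets K only in the point e. -/
/-!
Choose a linear functional `φ` vanishing on `f`. Its level line through `e` meets `K` only in
`e`, and since `K` has an interior point while `e` is not one, `φ > φ e` on `K \ {e}`, in
particular on the finitely many points of `S \ {e}`. Finiteness gives a slope bound `L`, so that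
for any `ψ` with `ψ f ≠ 0` the functional `χ = ψ - L • φ` attains its maximum over `K` at `e`,
while `χ f = ψ f ≠ 0`. Moving `p` along `f` until `χ (p + m • f) > χ e`, the segment from `e`
leaves `K` immediately.
-/

open Filter Topology

section

variable {E : Type*} [AddCommGroup E] [Module ℝ E]

lemma segment_inter_eq_singleton_of_forall_le {K : Set E} {e q : E} (χ : E →ₗ[ℝ] ℝ)
    (heK : e ∈ K) (hK : ∀ z ∈ K, χ z ≤ χ e) (hq : χ e < χ q) :
    segment ℝ e q ∩ K = {e} := by
  refine Set.Subset.antisymm ?_ (by simpa using ⟨left_mem_segment ℝ e q, heK⟩)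
  rintro z ⟨⟨a, b, ha, hb, hab, rfl⟩, hzK⟩
  have hχz := hK _ hzK
  simp only [map_add, map_smul, smul_eq_mul] at hχz
  obtain rfl : a = 1 - b := by linarith
  obtain rfl : b = 0 := by nlinarith
  simp_all

lemma exists_forall_mem_convexHull_sub_smul_le (S : Finset E) {e : E} (φ ψ : E →ₗ[ℝ] ℝ)
    (hS : ∀ s ∈ S, s ≠ e → φ e < φ s) :
    ∃ L : ℝ, ∀ z ∈ convexHull ℝ (S : Set E), (ψ - L • φ) z ≤ (ψ - L • φ) e := by
  have hφ : ∀ s ∈ S, 0 ≤ φ s - φ e := fun s hs => by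
    by_cases hse : s = e
    · simp [hse]
    · exact (sub_pos.2 (hS s hs hse)).le
  -- a sum of nonnegative slopes bounds each of them
  set L := ∑ s ∈ S, |ψ s - ψ e| / (φ s - φ e)
  have hslope : ∀ s ∈ S, |ψ s - ψ e| ≤ L * (φ s - φ e) := fun s hs => by
    by_cases hse : s = e
    · simp [hse]
    refine (div_le_iff₀ (sub_pos.2 (hS s hs hse))).1 ?_
    exact Finset.single_le_sum (f := fun t => |ψ t - ψ e| / (φ t - φ e))
      (fun t ht => div_nonneg (abs_nonneg _) (hφ t ht)) hs
  refine ⟨L, fun z hz => convexHull_min (fun s hs => ?_)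
    (convex_halfSpace_le (ψ - L • φ).isLinear _) hz⟩
  simp only [Set.mem_ofPred_eq, LinearMap.sub_apply, LinearMap.smul_apply, smul_eq_mul]
  linarith [le_abs_self (ψ s - ψ e), hslope s hs]

variable [TopologicalSpace E] [IsTopologicalAddGroup E] [ContinuousSMul ℝ E]

lemma exists_ne_zero_add_smul_mem_of_mem_interior {K : Set E} {e : E} (he : e ∈ interior K)
    (f : E) : ∃ t : ℝ, t ≠ 0 ∧ e + t • f ∈ K := by
  have hcont : Tendsto (fun t : ℝ => e + t • f) (𝓝 0) (𝓝 e) :=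
    (by fun_prop : Continuous fun t : ℝ => e + t • f).tendsto' 0 e (by simp)
  have hK : ∀ᶠ t in 𝓝[≠] (0 : ℝ), e + t • f ∈ K :=
    nhdsWithin_le_nhds (hcont.eventually (mem_interior_iff_mem_nhds.1 he))
  exact (hK.and self_mem_nhdsWithin).exists.imp fun t ht => ⟨ht.2, ht.1⟩

lemma Convex.lt_of_mem_of_ne {K : Set E} (hK : Convex ℝ K) {e p : E} (φ : E →ₗ[ℝ] ℝ)
    (hp : p ∈ interior K) (he : e ∉ interior K) (hlevel : ∀ x ∈ K, φ x = φ e → x = e)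
    (hφp : φ e < φ p) {x : E} (hx : x ∈ K) (hxe : x ≠ e) : φ e < φ x := by
  refine lt_of_le_of_ne (not_lt.1 fun hxlt => ?_) fun h => hxe (hlevel x hx h.symm)
  -- the segment from `x` to `p` crosses the level `φ e` at an interior point of `K`
  set t := (φ e - φ x) / (φ p - φ x)
  have hd : 0 < φ p - φ x := by linarith
  have ht0 : 0 < t := div_pos (by linarith) hd
  have ht1 : t < 1 := (div_lt_one hd).2 (by linarith)
  have hz : t • p + (1 - t) • x ∈ interior K :=
    hK.combo_interior_self_mem_interior hp hx ht0 (by linarith) (by ring)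
  have hφz : φ (t • p + (1 - t) • x) = φ e := by
    simp only [map_add, map_smul, smul_eq_mul, t]
    field_simp
    ring
  exact he (hlevel _ (interior_subset hz) hφz ▸ hz)

theorem exists_segment_inter_convexHull_eq_singleton (S : Finset E) {e f p : E}
    (φ : E →ₗ[ℝ] ℝ) (hφf : φ f = 0) (hf : f ≠ 0)
    (hlevel : ∀ x ∈ convexHull ℝ (S : Set E), φ x = φ e → x = e)
    (heK : e ∈ convexHull ℝ (S : Set E)) (he : e ∉ interior (convexHull ℝ (S : Set E)))
    (hp : p ∈ interior (convexHull ℝ (S : Set E))) :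
    ∃ m : ℝ, segment ℝ e (p + m • f) ∩ convexHull ℝ (S : Set E) = {e} := by
  wlog hφp : φ e < φ p generalizing φ
  · have hpe : φ p ≠ φ e := fun h => he (hlevel p (interior_subset hp) h ▸ hp)
    refine this (-φ) (by simp [hφf]) (fun x hx h => hlevel x hx (by simpa using h)) ?_
    simpa using lt_of_le_of_ne (not_lt.1 hφp) hpe
  have hS : ∀ s ∈ S, s ≠ e → φ e < φ s := fun s hs =>
    (convex_convexHull ℝ _).lt_of_mem_of_ne φ hp he hlevel hφp (subset_convexHull ℝ _ hs)
  obtain ⟨ψ, hψf⟩ := Module.Projective.exists_dual_ne_zero ℝ hf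
  obtain ⟨L, hL⟩ := exists_forall_mem_convexHull_sub_smul_le S φ ψ hS
  set χ := ψ - L • φ
  have hχf : χ f ≠ 0 := by simpa [χ, hφf] using hψf
  refine ⟨(χ e + 1 - χ p) / χ f, segment_inter_eq_singleton_of_forall_le χ heK hL ?_⟩
  rw [map_add, map_smul, smul_eq_mul, div_mul_cancel₀ _ hχf]
  linarith

end

noncomputable def perpDot (f : ℝ × ℝ) : (ℝ × ℝ) →ₗ[ℝ] ℝ :=
  f.1 • LinearMap.snd ℝ ℝ ℝ - f.2 • LinearMap.fst ℝ ℝ ℝ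

lemma perpDot_apply (f v : ℝ × ℝ) : perpDot f v = f.1 * v.2 - f.2 * v.1 := rfl

lemma perpDot_self (f : ℝ × ℝ) : perpDot f f = 0 := by
  rw [perpDot_apply]
  ring

lemma exists_eq_smul_of_perpDot_eq_zero {f v : ℝ × ℝ} (hf : f ≠ 0) (h : perpDot f v = 0) :
    ∃ t : ℝ, v = t • f := by
  rw [perpDot_apply] at h
  obtain h1 | h2 : f.1 ≠ 0 ∨ f.2 ≠ 0 := by
    by_contra! h0
    exact hf (Prod.ext h0.1 h0.2)
  · exact ⟨v.1 / f.1, Prod.ext (by simp [h1]) (by simp; field_simp; linarith)⟩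
  · exact ⟨v.2 / f.2, Prod.ext (by simp; field_simp; linarith) (by simp [h2])⟩

theorem stmt_5_general
    (S : Finset (ℝ × ℝ)) (K : Set (ℝ × ℝ)) (hK : K = convexHull ℝ (S : Set (ℝ × ℝ)))
    (e : ℝ × ℝ) (heK : e ∈ K)
    (f : ℝ × ℝ) (hf : f ≠ 0)
    (hline : {v : ℝ × ℝ | ∃ t : ℝ, v = e + t • f} ∩ K = {e})
    (p : ℝ × ℝ) (hp : p ∈ interior K) :
    ∃ m : ℝ, segment ℝ e (p + m • f) ∩ K = {e} := by
  subst hK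
  have hline' (t : ℝ) (ht : e + t • f ∈ convexHull ℝ (S : Set (ℝ × ℝ))) : t = 0 := by
    have : e + t • f = e := hline.subset ⟨⟨t, rfl⟩, ht⟩
    simpa [hf] using this
  refine exists_segment_inter_convexHull_eq_singleton S (perpDot f) (perpDot_self f) hf ?_ heK
    ?_ hp
  · intro x hx hxe
    obtain ⟨t, ht⟩ :=
      exists_eq_smul_of_perpDot_eq_zero hf (show perpDot f (x - e) = 0 by simp [hxe])
    obtain rfl : x = e + t • f := by rw [← ht]; abel
    simp [hline' t hx]
  · intro he
    obtain ⟨t, ht0, ht⟩ := exists_ne_zero_add_smul_mem_of_mem_interior he f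
    exact ht0 (hline' t ht)

/-- Polyhedrality step (Proposition 2.1): for a convex polygon `K` with vertex `e` met by
the line `e + ℝ • f` only in `e`, and interior point `p`, some segment from `e` to
`p + m • f` meets `K` only in `e`. -/
theorem stmt_5
    (S : Finset (ℝ × ℝ)) (K : Set (ℝ × ℝ)) (hK : K = convexHull ℝ (S : Set (ℝ × ℝ)))
    (hKint : (interior K).Nonempty)
    (e : ℝ × ℝ) (heK : e ∈ K)
    (f : ℝ × ℝ) (hf : f ≠ 0)
    (hline : {v : ℝ × ℝ | ∃ t : ℝ, v = e + t • f} ∩ K = {e})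
    (p : ℝ × ℝ) (hp : p ∈ interior K) :
    ∃ m : ℝ, segment ℝ e (p + m • f) ∩ K = {e} :=
  stmt_5_general S K hK e heK f hf hline p hp
end
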